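/- Let p be a prime, let n be an integer with 2 < n < p − 1, and let ω ∈ (ZMod p)ˣ be an element of multiplicative order n. Let F = ZMod p ⋊ ⟨ω⟩ be the Frobenius group of order n·p in which ⟨ω⟩ acts on ZMod p by multiplication. Then the inner holomorph of F (the subgroup F_L·F_R of Sym(F)) is 3-closed, and F is not a CI-group with respect to ternary relational structures. -/

import Mathlib

open Equiv Pointwise

section PermGroupDefs

variable {Y : Type*}

/-- A subgroup of `Equiv.Perm Y` is transitive if it acts transitively on `Y`. -/
def SubTrans (G : Subgroup (Equiv.Perm Y)) : Prop :=
  ∀ x y : Y, ∃ g ∈ G, g x = y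

/-- A subgroup of `Equiv.Perm Y` is semiregular if only its identity fixes a point. -/
def SubSemiregular (H : Subgroup (Equiv.Perm Y)) : Prop :=
  ∀ h ∈ H, (∃ x : Y, h x = x) → h = 1

/-- A subgroup of `Equiv.Perm Y` is regular if it is transitive and semiregular. -/
def SubRegular (H : Subgroup (Equiv.Perm Y)) : Prop :=
  SubTrans H ∧ SubSemiregular H

/-- Two-transitivity. -/
def Sub2Trans (G : Subgroup (Equiv.Perm Y)) : Prop :=
  ∀ x₁ x₂ y₁ y₂ : Y, x₁ ≠ x₂ → y₁ ≠ y₂ → ∃ g ∈ G, g x₁ = y₁ ∧ g x₂ = y₂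

/-- Orbit of a point under a subgroup of `Equiv.Perm Y`. -/
def SubOrbit (H : Subgroup (Equiv.Perm Y)) (x : Y) : Set Y :=
  {y | ∃ h ∈ H, h x = y}

/-- The set of orbits of a subgroup of `Equiv.Perm Y`. -/
def SubOrbits (H : Subgroup (Equiv.Perm Y)) : Set (Set Y) :=
  Set.range (SubOrbit H)

/-- A block for a subgroup of `Equiv.Perm Y`. -/
def SubIsBlock (G : Subgroup (Equiv.Perm Y)) (B : Set Y) : Prop :=
  ∀ g ∈ G, (g : Equiv.Perm Y) '' B = B ∨ Disjoint ((g : Equiv.Perm Y) '' B) B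

/-- Primitivity: transitive and the only blocks are trivial. -/
def SubPrimitive (G : Subgroup (Equiv.Perm Y)) : Prop :=
  SubTrans G ∧ ∀ B : Set Y, B.Nonempty → SubIsBlock G B → B = Set.univ ∨ ∃ x, B = {x}

/-- A block system: a `G`-invariant partition of `Y`. -/
def IsBlockSystem (G : Subgroup (Equiv.Perm Y)) (P : Set (Set Y)) : Prop :=
  (∀ B ∈ P, B.Nonempty) ∧ (∀ x : Y, ∃! B : Set Y, B ∈ P ∧ x ∈ B) ∧
    (∀ g ∈ G, ∀ B ∈ P, (g : Equiv.Perm Y) '' B ∈ P)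

/-- A normal block system: the set of orbits of a normal subgroup. -/
def IsNormalBlockSystem (G : Subgroup (Equiv.Perm Y)) (P : Set (Set Y)) : Prop :=
  IsBlockSystem G P ∧
    ∃ N : Subgroup (Equiv.Perm Y), N ≤ G ∧ (∀ g ∈ G, ∀ x ∈ N, g * x * g⁻¹ ∈ N) ∧
      P = SubOrbits N

/-- `P` refines `Q`: every block of `P` is contained in a block of `Q`. -/
def Refines (P Q : Set (Set Y)) : Prop :=
  ∀ B ∈ P, ∃ C ∈ Q, B ⊆ C

/-- The partition of `Y` into singletons. -/
def SingletonPartition (Y : Type*) : Set (Set Y) :=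
  Set.range fun x : Y => ({x} : Set Y)

/-- A minimal (nontrivial) block system. -/
def IsMinimalBlockSystem (G : Subgroup (Equiv.Perm Y)) (P : Set (Set Y)) : Prop :=
  IsBlockSystem G P ∧ P ≠ SingletonPartition Y ∧
    ∀ Q : Set (Set Y), IsBlockSystem G Q → Refines Q P →
      Q = SingletonPartition Y ∨ Q = P

/-- `fix_G(P)`: elements of `G` stabilizing every block of `P` setwise. -/
def FixBlocks (G : Subgroup (Equiv.Perm Y)) (P : Set (Set Y)) : Subgroup (Equiv.Perm Y) :=
  G ⊓ ⨅ B ∈ P, MulAction.stabilizer (Equiv.Perm Y) B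

/-- The pointwise stabilizer of a set, inside the full symmetric group. -/
def PointStab (A : Set Y) : Subgroup (Equiv.Perm Y) :=
  ⨅ a ∈ A, MulAction.stabilizer (Equiv.Perm Y) a

/-- The support of a subgroup of `Equiv.Perm Y`. -/
def SubSupp (H : Subgroup (Equiv.Perm Y)) : Set Y :=
  {y | ∃ h ∈ H, h y ≠ y}

/-- `N` is a normal subgroup of the subgroup `H`. -/
def NormalIn {G : Type*} [Group G] (H N : Subgroup G) : Prop :=
  N ≤ H ∧ ∀ h ∈ H, ∀ x ∈ N, h * x * h⁻¹ ∈ N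

/-- `N` is a minimal normal subgroup of the subgroup `H`. -/
def MinimalNormalIn {G : Type*} [Group G] (H N : Subgroup G) : Prop :=
  NormalIn H N ∧ N ≠ ⊥ ∧ ∀ M : Subgroup G, NormalIn H M → M ≤ N → M = ⊥ ∨ M = N

/-- The socle of a subgroup `H`: the subgroup generated by the minimal
normal subgroups of `H`. -/
def SocleIn {G : Type*} [Group G] (H : Subgroup G) : Subgroup G :=
  ⨆ N ∈ {N : Subgroup G | MinimalNormalIn H N}, N

/-- The conjugate subgroup `g⁻¹ H g`. -/
def ConjSub {G : Type*} [Group G] (g : G) (H : Subgroup G) : Subgroup G :=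
  Subgroup.map (MulAut.conj g⁻¹).toMonoidHom H

/-- The permutation of an invariant set induced by an element of its setwise stabilizer. -/
def restrictHom {G Y : Type*} [Group G] [MulAction G Y] (A : Set Y) :
    MulAction.stabilizer G A →* Equiv.Perm A where
  toFun g := (MulAction.toPerm (g : G)).subtypePerm (fun y => by
    have hA : (g : G) • A = A := MulAction.mem_stabilizer_iff.mp g.2
    constructor
    · intro hy
      have : (g : G) • y ∈ (g : G) • A := by rw [hA]; exact hy
      exact Set.smul_mem_smul_set_iff.mp this
    · intro hy
      have : (g : G) • y ∈ (g : G) • A := Set.smul_mem_smul_set hy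
      rw [hA] at this; exact this)
  map_one' := by
    ext x
    simp [Equiv.Perm.subtypePerm]
  map_mul' g h := by
    ext x
    simp [Equiv.Perm.subtypePerm, mul_smul]

/-- The permutation group induced on an invariant set `A` by (the setwise stabilizer of `A`
in) a subgroup `H`. -/
def InducedSub {G Y : Type*} [Group G] [MulAction G Y] (H : Subgroup G) (A : Set Y) :
    Subgroup (Equiv.Perm A) :=
  Subgroup.map (restrictHom A) (H.comap (MulAction.stabilizer G A).subtype)

end PermGroupDefs

section ClassR

/-- The class `𝓡` of groups from Definition 1.7. -/
def IsClassRGroup (R : Type*) [Group R] : Prop :=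
  ∃ n : ℕ, 0 < n ∧ Odd n ∧ Squarefree n ∧
    (Nonempty (R ≃* Multiplicative (ZMod n)) ∨
     Nonempty (R ≃* Multiplicative (ZMod n × ZMod 2)) ∨
     Nonempty (R ≃* Multiplicative (ZMod n × ZMod 2 × ZMod 2)) ∨
     Nonempty (R ≃* Multiplicative (ZMod n × ZMod 2 × ZMod 2 × ZMod 2)) ∨
     Nonempty (R ≃* Multiplicative (ZMod n × ZMod 2 × ZMod 2 × ZMod 2 × ZMod 2)) ∨
     Nonempty (R ≃* Multiplicative (ZMod n × ZMod 4)) ∨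
     Nonempty (R ≃* Multiplicative (ZMod n) × QuaternionGroup 2) ∨
     (∃ o : ℕ, (o = 2 ∨ o = 4 ∨ o = 8) ∧
       ∃ ψ : Multiplicative (ZMod o) →* MulAut (Multiplicative (ZMod n)),
         ψ (Multiplicative.ofAdd 1) ≠ 1 ∧ ψ (Multiplicative.ofAdd 1) ^ 2 = 1 ∧
         Nonempty (R ≃* Multiplicative (ZMod n) ⋊[ψ] Multiplicative (ZMod o))))

end ClassR

section CI

/-- `σ` is an isomorphism between the ternary relational structures `R` and `S`. -/
def TernaryIso {X I : Type*} (R S : I → Set (X × X × X)) (σ : Equiv.Perm X) : Prop :=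
  ∀ i, (fun t : X × X × X => (σ t.1, σ t.2.1, σ t.2.2)) '' R i = S i

/-- A ternary relational structure on a group `G` is a Cayley object if all left
translations are automorphisms. -/
def CayleyTernary (G : Type*) [Group G] {I : Type*} (R : I → Set (G × G × G)) : Prop :=
  ∀ g : G, TernaryIso R R (Equiv.mulLeft g)

/-- `G` is a CI-group with respect to ternary relational structures. -/
def IsTernaryCI (G : Type*) [Group G] : Prop :=
  ∀ (I : Type) (R S : I → Set (G × G × G)), CayleyTernary G R → CayleyTernary G S →
    (∃ σ : Equiv.Perm G, TernaryIso R S σ) →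
    ∃ φ : G ≃* G, TernaryIso R S φ.toEquiv

/-- `σ` is an isomorphism between the binary relational structures `R` and `S`. -/
def BinaryIso {X I : Type*} (R S : I → Set (X × X)) (σ : Equiv.Perm X) : Prop :=
  ∀ i, (fun t : X × X => (σ t.1, σ t.2)) '' R i = S i

/-- A binary relational structure on a group `G` is a Cayley object if all left
translations are automorphisms. -/
def CayleyBinary (G : Type*) [Group G] {I : Type*} (R : I → Set (G × G)) : Prop :=
  ∀ g : G, BinaryIso R R (Equiv.mulLeft g)

/-- `G` is a CI-group with respect to binary relational structures. -/
def IsBinaryCI (G : Type*) [Group G] : Prop :=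
  ∀ (I : Type) (R S : I → Set (G × G)), CayleyBinary G R → CayleyBinary G S →
    (∃ σ : Equiv.Perm G, BinaryIso R S σ) →
    ∃ φ : G ≃* G, BinaryIso R S φ.toEquiv

end CI

section Closure

/-- `σ` belongs to the `k`-closure of `G ≤ Sym(Y)`: it preserves every orbit of the
componentwise action of `G` on `Y^k`. -/
def InKClosure {Y : Type*} (k : ℕ) (G : Subgroup (Equiv.Perm Y)) (σ : Equiv.Perm Y) : Prop :=
  ∀ t : Fin k → Y, ∃ g ∈ G, ∀ i, σ (t i) = g (t i)

/-- `G` is `k`-closed. -/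
def IsKClosed {Y : Type*} (k : ℕ) (G : Subgroup (Equiv.Perm Y)) : Prop :=
  ∀ σ : Equiv.Perm Y, InKClosure k G σ → σ ∈ G

/-- The inner holomorph of `G`: the subgroup of `Sym(G)` generated by the left and right
regular representations. -/
def InnerHolomorph (G : Type*) [Group G] : Subgroup (Equiv.Perm G) :=
  Subgroup.closure
    ((Set.range fun g : G => Equiv.mulLeft g) ∪ (Set.range fun g : G => Equiv.mulRight g))

end Closure

section Aux17

lemma innerHol_form {G : Type*} [Group G] {g : Equiv.Perm G}
    (h : g ∈ InnerHolomorph G) : ∃ a b : G, ∀ x, g x = a * x * b := by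
  refine Subgroup.closure_induction ?_ ?_ ?_ ?_ h
  · rintro x (⟨a, rfl⟩ | ⟨b, rfl⟩)
    · exact ⟨a, 1, fun x => by simp⟩
    · exact ⟨1, b, fun x => by simp⟩
  · exact ⟨1, 1, fun x => by simp⟩
  · rintro x y _ _ ⟨a, b, hx⟩ ⟨a', b', hy⟩
    exact ⟨a * a', b' * b, fun t => by
      simp only [Equiv.Perm.mul_apply, hx, hy]; group⟩
  · rintro x _ ⟨a, b, hx⟩
    refine ⟨a⁻¹, b⁻¹, fun y => ?_⟩
    have : x (a⁻¹ * y * b⁻¹) = y := by rw [hx]; group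
    calc x⁻¹ y = x⁻¹ (x (a⁻¹ * y * b⁻¹)) := by rw [this]
    _ = a⁻¹ * y * b⁻¹ := by simp

lemma mem_innerHol_of_form {G : Type*} [Group G] {σ : Equiv.Perm G} (a b : G)
    (h : ∀ x, σ x = a * x * b) : σ ∈ InnerHolomorph G := by
  have : σ = Equiv.mulLeft a * Equiv.mulRight b := by
    ext x; simp [h x, Equiv.Perm.mul_apply, mul_assoc]
  rw [this]
  exact mul_mem
    (Subgroup.subset_closure (Set.mem_union_left _ ⟨a, rfl⟩))
    (Subgroup.subset_closure (Set.mem_union_right _ ⟨b, rfl⟩))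

end Aux17
section Aux17B

variable {p : ℕ} {ω : (ZMod p)ˣ}
  {ψ : ↥(Subgroup.zpowers ω) →* MulAut (Multiplicative (ZMod p))}

/-- Element constructor for the semidirect product. -/
def EE (ψ : ↥(Subgroup.zpowers ω) →* MulAut (Multiplicative (ZMod p)))
    (α : ZMod p) (u : ↥(Subgroup.zpowers ω)) :
    Multiplicative (ZMod p) ⋊[ψ] ↥(Subgroup.zpowers ω) :=
  ⟨Multiplicative.ofAdd α, u⟩

/-- Coercion of a power of `ω` to `ZMod p`. -/
def cbar (u : ↥(Subgroup.zpowers ω)) : ZMod p := ((u : (ZMod p)ˣ) : ZMod p)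

lemma cbar_mul (u v : ↥(Subgroup.zpowers ω)) : cbar (u * v) = cbar u * cbar v := by
  simp [cbar]

lemma cbar_one : cbar (1 : ↥(Subgroup.zpowers ω)) = 1 := by simp [cbar]

@[simp] lemma EE_left (α : ZMod p) (u : ↥(Subgroup.zpowers ω)) :
    (EE ψ α u).left = Multiplicative.ofAdd α := rfl

@[simp] lemma EE_right (α : ZMod p) (u : ↥(Subgroup.zpowers ω)) :
    (EE ψ α u).right = u := rfl

lemma EE_dest (x : Multiplicative (ZMod p) ⋊[ψ] ↥(Subgroup.zpowers ω)) :
    x = EE ψ (Multiplicative.toAdd x.left) x.right := rfl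

lemma EE_left_inj {α β : ZMod p} {u v : ↥(Subgroup.zpowers ω)}
    (h : EE ψ α u = EE ψ β v) : α = β := by
  have := congrArg SemidirectProduct.left h
  simpa using Multiplicative.ofAdd.injective this

lemma mulE
    (hψ : ∀ (u : ↥(Subgroup.zpowers ω)) (x : ZMod p),
      ψ u (Multiplicative.ofAdd x) = Multiplicative.ofAdd (((u : (ZMod p)ˣ) : ZMod p) * x))
    (α β : ZMod p) (u v : ↥(Subgroup.zpowers ω)) :
    EE ψ α u * EE ψ β v = EE ψ (α + cbar u * β) (u * v) := by
  refine SemidirectProduct.ext ?_ rfl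
  show Multiplicative.ofAdd α * ψ u (Multiplicative.ofAdd β) = _
  rw [hψ u β, ← ofAdd_add]
  rfl

lemma invE1
    (hψ : ∀ (u : ↥(Subgroup.zpowers ω)) (x : ZMod p),
      ψ u (Multiplicative.ofAdd x) = Multiplicative.ofAdd (((u : (ZMod p)ˣ) : ZMod p) * x))
    (α : ZMod p) :
    (EE ψ α (1 : ↥(Subgroup.zpowers ω)))⁻¹ = EE ψ (-α) 1 := by
  rw [eq_comm, eq_inv_iff_mul_eq_one, mulE hψ]
  refine SemidirectProduct.ext ?_ ?_ <;> simp [cbar_one]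

lemma conjE
    (hψ : ∀ (u : ↥(Subgroup.zpowers ω)) (x : ZMod p),
      ψ u (Multiplicative.ofAdd x) = Multiplicative.ofAdd (((u : (ZMod p)ˣ) : ZMod p) * x))
    (β : ZMod p) (v : ↥(Subgroup.zpowers ω)) (α : ZMod p) (u : ↥(Subgroup.zpowers ω)) :
    EE ψ β v * EE ψ α u * (EE ψ β v)⁻¹ =
      EE ψ (cbar v * α + (1 - cbar u) * β) u := by
  rw [mul_inv_eq_iff_eq_mul, mulE hψ, mulE hψ]
  have h1 : β + cbar v * α = (cbar v * α + (1 - cbar u) * β) + cbar u * β := by ring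
  have h2 : v * u = u * v := mul_comm v u
  rw [h1, h2]

end Aux17B
section Aux17C

variable {p : ℕ} [Fact p.Prime] {ω : (ZMod p)ˣ}
  {ψ : ↥(Subgroup.zpowers ω) →* MulAut (Multiplicative (ZMod p))}

lemma magic_lemma
    (hψ : ∀ (u : ↥(Subgroup.zpowers ω)) (x : ZMod p),
      ψ u (Multiplicative.ofAdd x) = Multiplicative.ofAdd (((u : (ZMod p)ˣ) : ZMod p) * x))
    {σ : Equiv.Perm (Multiplicative (ZMod p) ⋊[ψ] ↥(Subgroup.zpowers ω))}
    {c : Multiplicative (ZMod p) ⋊[ψ] ↥(Subgroup.zpowers ω)} {z : ZMod p}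
    (H : ∀ x y w : Multiplicative (ZMod p) ⋊[ψ] ↥(Subgroup.zpowers ω),
      ∃ a b, σ x = a * x * b ∧ σ y = a * y * b ∧ σ w = a * w * b)
    (hline : ∀ m : ZMod p, σ (EE ψ m 1) = EE ψ (z * m) 1 * c)
    {α₁ α₂ β₁ β₂ : ZMod p} {u₁ u₂ : ↥(Subgroup.zpowers ω)}
    (h1 : cbar u₁ ≠ 1) (h2 : cbar u₂ ≠ 1) (h12 : cbar u₁ ≠ cbar u₂)
    (e1 : σ (EE ψ α₁ u₁) = EE ψ (z * α₁ + (1 - cbar u₁) * β₁) u₁ * c)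
    (e2 : σ (EE ψ α₂ u₂) = EE ψ (z * α₂ + (1 - cbar u₂) * β₂) u₂ * c) :
    β₁ = β₂ := by
  set m : ZMod p :=
    ((1 - cbar u₂) * α₁ - (1 - cbar u₁) * α₂) / (cbar u₁ - cbar u₂) with hm
  obtain ⟨a, b, h0, hA, hB⟩ := H (EE ψ m 1) (EE ψ α₁ u₁) (EE ψ α₂ u₂)
  have e0' : a * EE ψ m 1 * b = EE ψ (z * m) 1 * c := h0.symm.trans (hline m)
  have key : ∀ (α β : ZMod p) (u : ↥(Subgroup.zpowers ω)),
      σ (EE ψ α u) = EE ψ (z * α + (1 - cbar u) * β) u * c →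
      a * EE ψ α u = EE ψ (z * α + (1 - cbar u) * β) u * (EE ψ (z * m) 1)⁻¹ *
        a * EE ψ m 1 → True := fun _ _ _ _ _ => trivial
  have cancel : ∀ (α β : ZMod p) (u : ↥(Subgroup.zpowers ω)),
      a * EE ψ α u * b = EE ψ (z * α + (1 - cbar u) * β) u * c →
      a * EE ψ α u =
        EE ψ (z * α + (1 - cbar u) * β) u * (EE ψ (z * m) 1)⁻¹ * (a * EE ψ m 1) := by
    intro α β u h
    have hb : (a * EE ψ α u) * b =
        (EE ψ (z * α + (1 - cbar u) * β) u * (EE ψ (z * m) 1)⁻¹ * (a * EE ψ m 1)) * b := by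
      calc (a * EE ψ α u) * b = EE ψ (z * α + (1 - cbar u) * β) u * c := h
      _ = EE ψ (z * α + (1 - cbar u) * β) u * ((EE ψ (z * m) 1)⁻¹ * (a * EE ψ m 1 * b)) := by
          rw [e0']; group
      _ = _ := by group
    exact mul_right_cancel hb
  have k1 := cancel α₁ β₁ u₁ (hA.symm.trans e1)
  have k2 := cancel α₂ β₂ u₂ (hB.symm.trans e2)
  -- expand into coordinates
  have ha : a = EE ψ (Multiplicative.toAdd a.left) a.right := EE_dest a
  set βa := Multiplicative.toAdd a.left with hβa
  set va := a.right with hva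
  rw [ha, invE1 hψ] at k1 k2
  rw [mulE hψ, mulE hψ, mulE hψ, mulE hψ] at k1 k2
  have L1 := EE_left_inj k1
  have L2 := EE_left_inj k2
  simp only [cbar_mul, cbar_one, mul_one, one_mul] at L1 L2
  -- algebra
  have hd : cbar u₁ - cbar u₂ ≠ 0 := sub_ne_zero.mpr h12
  have hA1 : (1 : ZMod p) - cbar u₁ ≠ 0 := sub_ne_zero.mpr (Ne.symm h1)
  have hA2 : (1 : ZMod p) - cbar u₂ ≠ 0 := sub_ne_zero.mpr (Ne.symm h2)
  have hkey : (1 - cbar u₂) * (α₁ - cbar u₁ * m) = (1 - cbar u₁) * (α₂ - cbar u₂ * m) := by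
    rw [hm]; field_simp; ring
  have main : ((1 - cbar u₁) * (1 - cbar u₂)) * β₁ = ((1 - cbar u₁) * (1 - cbar u₂)) * β₂ := by
    linear_combination (-(1 - cbar u₂)) * L1 + (1 - cbar u₁) * L2 + (cbar va - z) * hkey
  exact mul_left_cancel₀ (mul_ne_zero hA1 hA2) main

end Aux17C
section Aux17D

variable {p : ℕ} [Fact p.Prime] {ω : (ZMod p)ˣ}
  {ψ : ↥(Subgroup.zpowers ω) →* MulAut (Multiplicative (ZMod p))}

lemma cbar_inj {u v : ↥(Subgroup.zpowers ω)} (h : cbar u = cbar v) : u = v :=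
  Subtype.ext (Units.ext h)

theorem innerHol_threeClosed (n : ℕ) (hn : 2 < n) (hω : orderOf ω = n)
    (hψ : ∀ (u : ↥(Subgroup.zpowers ω)) (x : ZMod p),
      ψ u (Multiplicative.ofAdd x) = Multiplicative.ofAdd (((u : (ZMod p)ˣ) : ZMod p) * x)) :
    IsKClosed 3 (InnerHolomorph (Multiplicative (ZMod p) ⋊[ψ] ↥(Subgroup.zpowers ω))) := by
  intro σ hσ
  have H : ∀ x y w : Multiplicative (ZMod p) ⋊[ψ] ↥(Subgroup.zpowers ω),
      ∃ a b, σ x = a * x * b ∧ σ y = a * y * b ∧ σ w = a * w * b := by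
    intro x y w
    obtain ⟨g, hg, ht⟩ := hσ ![x, y, w]
    obtain ⟨a, b, hab⟩ := innerHol_form hg
    refine ⟨a, b, ?_, ?_, ?_⟩
    · have := ht 0; simpa [hab] using this
    · have := ht 1; simpa [hab] using this
    · have := ht 2; simpa [hab] using this
  set c := σ 1 with hc
  obtain ⟨a₀, b₀, h01, h02, -⟩ := H 1 (EE ψ 1 1) (EE ψ 1 1)
  set z := cbar a₀.right with hz
  -- the key pointwise description of σ
  have claim : ∀ x : Multiplicative (ZMod p) ⋊[ψ] ↥(Subgroup.zpowers ω),
      ∃ β : ZMod p,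
        σ x = EE ψ (z * Multiplicative.toAdd x.left + (1 - cbar x.right) * β) x.right * c := by
    intro x
    obtain ⟨a, b, k1, k2, k3⟩ := H 1 (EE ψ 1 1) x
    have hab : a * b = c := by rw [hc, k1]; group
    have hab0 : a₀ * b₀ = c := by rw [hc, h01]; group
    have hb : b = a⁻¹ * c := by rw [← hab]; group
    have hb0 : b₀ = a₀⁻¹ * c := by rw [← hab0]; group
    have hcu : a * EE ψ 1 1 * a⁻¹ = a₀ * EE ψ 1 1 * a₀⁻¹ := by
      have h3 : a * EE ψ 1 1 * b = a₀ * EE ψ 1 1 * b₀ := k2.symm.trans h02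
      rw [hb, hb0] at h3
      have h4 : (a * EE ψ 1 1 * a⁻¹) * c = (a₀ * EE ψ 1 1 * a₀⁻¹) * c := by
        calc (a * EE ψ 1 1 * a⁻¹) * c = a * EE ψ 1 1 * (a⁻¹ * c) := by group
        _ = a₀ * EE ψ 1 1 * (a₀⁻¹ * c) := h3
        _ = _ := by group
      exact mul_right_cancel h4
    have hza : cbar a.right = z := by
      rw [EE_dest a, EE_dest a₀, conjE hψ, conjE hψ] at hcu
      have := EE_left_inj hcu
      simpa [cbar_one] using this
    refine ⟨Multiplicative.toAdd a.left, ?_⟩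
    rw [k3, hb]
    have step : a * x * (a⁻¹ * c) = (a * x * a⁻¹) * c := by group
    rw [step, EE_dest a, EE_dest x, conjE hψ]
    simp only [EE_left, EE_right, toAdd_ofAdd]
    rw [hza]
  have hline : ∀ m : ZMod p, σ (EE ψ m 1) = EE ψ (z * m) 1 * c := by
    intro m
    obtain ⟨β, hβ⟩ := claim (EE ψ m 1)
    rw [hβ]
    norm_num [cbar_one]
  -- reference points on two nontrivial lines
  have hω1' : ω ≠ 1 := by
    intro h; rw [h, orderOf_one] at hω; omega
  have hω2' : ω * ω ≠ 1 := by
    intro h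
    have : orderOf ω ∣ 2 := orderOf_dvd_of_pow_eq_one (by rw [pow_two]; exact h)
    rw [hω] at this
    have := Nat.le_of_dvd (by norm_num) this
    omega
  set w₁ : ↥(Subgroup.zpowers ω) := ⟨ω, Subgroup.mem_zpowers ω⟩ with hw₁
  set w₂ : ↥(Subgroup.zpowers ω) := w₁ * w₁ with hw₂
  have hcb1 : cbar w₁ ≠ 1 := by
    intro h
    exact hω1' (Units.ext (by simpa [cbar, hw₁] using h))
  have hcb2 : cbar w₂ ≠ 1 := by
    intro h
    exact hω2' (Units.ext (by simpa [cbar, hw₂, hw₁] using h))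
  have hcb12 : cbar w₁ ≠ cbar w₂ := by
    intro h
    have : w₁ = w₂ := cbar_inj h
    rw [hw₂] at this
    have : ω = ω * ω := congrArg Subtype.val this
    have : ω * 1 = ω * ω := by simpa using this
    exact hω1' (by simpa using (mul_left_cancel this).symm)
  obtain ⟨β₁, hy1⟩ := claim (EE ψ 0 w₁)
  obtain ⟨β₂, hy2⟩ := claim (EE ψ 0 w₂)
  simp only [EE_left, EE_right, toAdd_ofAdd] at hy1 hy2
  have hb12 : β₁ = β₂ := magic_lemma hψ H hline hcb1 hcb2 hcb12 hy1 hy2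
  -- assemble the global pair
  refine mem_innerHol_of_form (EE ψ β₁ a₀.right) ((EE ψ β₁ a₀.right)⁻¹ * c) ?_
  intro x
  have hgoal : EE ψ β₁ a₀.right * x * ((EE ψ β₁ a₀.right)⁻¹ * c) =
      (EE ψ β₁ a₀.right * x * (EE ψ β₁ a₀.right)⁻¹) * c := by group
  rw [hgoal, EE_dest x, conjE hψ]
  obtain ⟨β, hβ⟩ := claim x
  rw [EE_dest x] at hβ
  simp only [EE_left, EE_right, toAdd_ofAdd] at hβ
  by_cases h0 : cbar x.right = 1
  · rw [hβ, h0]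
    have : x.right = 1 := cbar_inj (by rw [h0, cbar_one])
    congr 1
    rw [hz]
    ring_nf
  · have hβeq : β = β₁ := by
      by_cases hxw : cbar x.right = cbar w₁
      · have h2 : β = β₂ :=
          magic_lemma hψ H hline h0 hcb2 (by rw [hxw]; exact hcb12) hβ hy2
        rw [h2, hb12]
      · exact magic_lemma hψ H hline h0 hcb1 hxw hβ hy1
    rw [hβ, hβeq, hz]

end Aux17D
section Aux17E

theorem not_ternaryCI_of_threeClosed {G : Type} [Group G]
    (h3 : IsKClosed 3 (InnerHolomorph G))
    (hna : ∃ s t : G, s * t ≠ t * s) : ¬ IsTernaryCI G := by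
  intro hCI
  classical
  set R : G × G × G → Set (G × G × G) :=
    fun t => {s | ∃ g ∈ InnerHolomorph G, (g t.1, g t.2.1, g t.2.2) = s} with hR
  have hinv : ∀ π : Equiv.Perm G, π ∈ InnerHolomorph G → ∀ i,
      (fun s : G × G × G => (π s.1, π s.2.1, π s.2.2)) '' R i = R i := by
    intro π hπ i
    ext s
    constructor
    · rintro ⟨s', ⟨g, hg, rfl⟩, rfl⟩
      exact ⟨π * g, mul_mem hπ hg, rfl⟩
    · rintro ⟨g, hg, rfl⟩
      refine ⟨((π⁻¹ * g) i.1, (π⁻¹ * g) i.2.1, (π⁻¹ * g) i.2.2),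
        ⟨π⁻¹ * g, mul_mem (inv_mem hπ) hg, rfl⟩, ?_⟩
      simp [Equiv.Perm.mul_apply]
  set ι : Equiv.Perm G := Equiv.inv G with hι
  set S : G × G × G → Set (G × G × G) :=
    fun t => (fun s : G × G × G => (ι s.1, ι s.2.1, ι s.2.2)) '' R t with hS
  have memL : ∀ g : G, Equiv.mulLeft g ∈ InnerHolomorph G := fun g =>
    Subgroup.subset_closure (Set.mem_union_left _ ⟨g, rfl⟩)
  have memR : ∀ g : G, Equiv.mulRight g ∈ InnerHolomorph G := fun g =>
    Subgroup.subset_closure (Set.mem_union_right _ ⟨g, rfl⟩)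
  have cayR : CayleyTernary G R := fun g => hinv (Equiv.mulLeft g) (memL g)
  have cayS : CayleyTernary G S := by
    intro g i
    show (fun t : G × G × G => (Equiv.mulLeft g t.1, Equiv.mulLeft g t.2.1,
      Equiv.mulLeft g t.2.2)) '' S i = S i
    rw [hS]
    rw [Set.image_image]
    have hfun : (fun s : G × G × G => (Equiv.mulLeft g (ι s.1), Equiv.mulLeft g (ι s.2.1),
        Equiv.mulLeft g (ι s.2.2))) =
        (fun s : G × G × G => (ι s.1, ι s.2.1, ι s.2.2)) ∘
          (fun s : G × G × G => (Equiv.mulRight g⁻¹ s.1, Equiv.mulRight g⁻¹ s.2.1,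
            Equiv.mulRight g⁻¹ s.2.2)) := by
      funext s
      simp [hι, mul_inv_rev]
    rw [hfun, Set.image_comp, hinv (Equiv.mulRight g⁻¹) (memR g⁻¹) i]
  obtain ⟨φ, hφ⟩ := hCI (G × G × G) R S cayR cayS ⟨ι, fun i => rfl⟩
  set π : Equiv.Perm G := ι.trans φ.toEquiv.symm with hπdef
  have hπ : π ∈ InnerHolomorph G := by
    apply h3
    intro t
    have hmem : ((t 0), (t 1), (t 2)) ∈ R ((t 0), (t 1), (t 2)) := ⟨1, one_mem _, rfl⟩
    have hmem2 : (ι (t 0), ι (t 1), ι (t 2)) ∈ S ((t 0), (t 1), (t 2)) :=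
      ⟨_, hmem, rfl⟩
    rw [← hφ ((t 0), (t 1), (t 2))] at hmem2
    obtain ⟨r, hr, hre⟩ := hmem2
    obtain ⟨g, hg, hge⟩ := hr
    refine ⟨g, hg, ?_⟩
    have c1 : φ.toEquiv r.1 = ι (t 0) := congrArg Prod.fst hre
    have c2 : φ.toEquiv r.2.1 = ι (t 1) := congrArg (fun q => q.2.1) hre
    have c3 : φ.toEquiv r.2.2 = ι (t 2) := congrArg (fun q => q.2.2) hre
    have g1 : g (t 0) = r.1 := congrArg Prod.fst hge
    have g2 : g (t 1) = r.2.1 := congrArg (fun q => q.2.1) hge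
    have g3 : g (t 2) = r.2.2 := congrArg (fun q => q.2.2) hge
    intro i
    fin_cases i
    · show π (t 0) = g (t 0)
      rw [hπdef, g1]
      show φ.toEquiv.symm (ι (t 0)) = r.1
      rw [← c1, Equiv.symm_apply_apply]
    · show π (t 1) = g (t 1)
      rw [hπdef, g2]
      show φ.toEquiv.symm (ι (t 1)) = r.2.1
      rw [← c2, Equiv.symm_apply_apply]
    · show π (t 2) = g (t 2)
      rw [hπdef, g3]
      show φ.toEquiv.symm (ι (t 2)) = r.2.2
      rw [← c3, Equiv.symm_apply_apply]
  obtain ⟨a, b, hab⟩ := innerHol_form hπ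
  have hinv2 : ∀ x : G, x⁻¹ = φ a * φ x * φ b := by
    intro x
    have h1 := hab x
    have h2 : φ (π x) = φ (a * x * b) := congrArg φ h1
    have h3 : φ (π x) = x⁻¹ := by
      show φ (φ.toEquiv.symm (ι x)) = x⁻¹
      simp [hι]
    rw [h3] at h2
    rw [h2, map_mul, map_mul]
  have hb : φ b = (φ a)⁻¹ := by
    have h1 : (1 : G)⁻¹ = φ a * φ 1 * φ b := hinv2 1
    have h2 : φ a * φ b = 1 := by simpa using h1.symm
    exact eq_inv_of_mul_eq_one_right h2
  have key : ∀ s : G, s⁻¹ = φ a * φ s * (φ a)⁻¹ := fun s => by rw [← hb]; exact hinv2 s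
  have haux : ∀ x y : G, y⁻¹ * x⁻¹ = x⁻¹ * y⁻¹ := by
    intro x y
    have h4 : (x * y)⁻¹ = x⁻¹ * y⁻¹ := by
      rw [key (x * y), map_mul, key x, key y]; group
    rw [← h4, mul_inv_rev]
  obtain ⟨s, t, hst⟩ := hna
  apply hst
  have h5 := haux s⁻¹ t⁻¹
  simpa using h5.symm

end Aux17E

/-- Corollary 7.2: for a prime `p` and `2 < n < p - 1`, the Frobenius group
`F = ZMod p ⋊ ⟨ω⟩` (with `ω` of multiplicative order `n` acting by multiplication) has
3-closed inner holomorph, and `F` is not a CI-group with respect to ternary relational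
structures. -/
theorem statement17 (p n : ℕ) (hp : p.Prime) (hn : 2 < n) (hnp : n < p - 1)
    (ω : (ZMod p)ˣ) (hω : orderOf ω = n)
    (ψ : ↥(Subgroup.zpowers ω) →* MulAut (Multiplicative (ZMod p)))
    (hψ : ∀ (u : ↥(Subgroup.zpowers ω)) (x : ZMod p),
      ψ u (Multiplicative.ofAdd x) = Multiplicative.ofAdd (((u : (ZMod p)ˣ) : ZMod p) * x)) :
    IsKClosed 3 (InnerHolomorph (Multiplicative (ZMod p) ⋊[ψ] ↥(Subgroup.zpowers ω))) ∧
    ¬ IsTernaryCI (Multiplicative (ZMod p) ⋊[ψ] ↥(Subgroup.zpowers ω)) := by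
  haveI := Fact.mk hp
  have h3 := innerHol_threeClosed (ψ := ψ) n hn hω hψ
  refine ⟨h3, not_ternaryCI_of_threeClosed h3 ?_⟩
  refine ⟨EE ψ 1 1, EE ψ 0 ⟨ω, Subgroup.mem_zpowers ω⟩, ?_⟩
  intro h
  rw [mulE hψ, mulE hψ] at h
  have h2 := EE_left_inj h
  simp only [cbar_one, mul_zero, add_zero, zero_add, mul_one] at h2
  have hω1 : ω = 1 := by
    apply Units.ext
    simpa [cbar] using h2.symm
  rw [hω1, orderOf_one] at hω
  omega
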